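/- arXiv:2106.02701 — 3 statements merged into one kernel-verified Lean document; each statement's English description precedes it below -/
import Mathlib

section
/- Let s₁,...,sₙ be a Markov chain and suppose the image random field over domain D splits as conditionally independent given the states, with foreground fragment likelihoods α₁(I_F) = Π_{y∈F} α₁(I_y) and background α₀ similarly. Then the joint probability factors as p(s_{1:n}, I_D) = Π_{i=2}^n (α₁(I_{F_i})/α₀(I_{F_i}))^{δ(F_i ⊆ D \ F_{1:i-1})} · p(s_i | s_{i-1}) · p(s₁, I_D), where F_i = F(s_i) is the fragment of state s_i, F_{1:i-1} is the union of the first i-1 fragments, and δ is the indicator function. -/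
/-!
Only the image factor needs work, and we telescope it over `n`. Because fragments are pairwise
equal or disjoint, the fragment of the `n`-th state either meets the visited region `F_{1:n}`
and then lies inside it (the image factor is unchanged), or it is disjoint from it, and then
switching its voxels from background to foreground multiplies the image factor by
`α₁(I_F) / α₀(I_F)`.
-/

/-- The union of the fragments of the first `k` states (`F_{1:k}` in the paper). -/
def visited {S D : Type*} [DecidableEq D] (F : S → Finset D) (s : ℕ → S) (k : ℕ) :
    Finset D :=
  (Finset.range k).biUnion fun j => F (s j)

/-- The likelihood of the image restricted to a fragment: the product of the per-voxel
densities. -/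
noncomputable def fragLik {D A : Type*} (α : A → ℝ) (I : D → A) (Fs : Finset D) : ℝ :=
  ∏ y ∈ Fs, α (I y)

theorem Finset.subset_biUnion_of_not_disjoint {ι α : Type*} [DecidableEq α] {t : Finset ι}
    {G : ι → Finset α} {x : Finset α} (h : ∀ i ∈ t, x = G i ∨ Disjoint x (G i))
    (hx : ¬Disjoint x (t.biUnion G)) : x ⊆ t.biUnion G := by
  obtain ⟨i, hi, hxi⟩ : ∃ i ∈ t, ¬Disjoint x (G i) := by
    simpa only [disjoint_biUnion_right, not_forall, exists_prop] using hx
  rw [(h i hi).resolve_right hxi]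
  exact subset_biUnion_of_mem G hi

theorem prod_ite_mem_union_of_disjoint {ι K : Type*} [Fintype ι] [DecidableEq ι]
    [CommGroupWithZero K] {A B : Finset ι} (hAB : Disjoint A B) (f g : ι → K)
    (hg : ∀ i ∈ A, g i ≠ 0) :
    ∏ i, (if i ∈ A ∪ B then f i else g i) =
      (∏ i ∈ A, f i) / (∏ i ∈ A, g i) * ∏ i, (if i ∈ B then f i else g i) := by
  have hpt : ∀ i, (if i ∈ A ∪ B then f i else g i) =
      (if i ∈ A then f i / g i else 1) * (if i ∈ B then f i else g i) := by
    intro i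
    by_cases hA : i ∈ A
    · simp [hA, Finset.disjoint_left.mp hAB hA, div_mul_cancel₀ _ (hg i hA)]
    · by_cases hB : i ∈ B <;> simp [hA, hB]
  rw [Finset.prod_congr rfl fun i _ => hpt i, Finset.prod_mul_distrib, Finset.prod_ite_mem,
    Finset.univ_inter, Finset.prod_div_distrib]

section visited

variable {S D : Type*} [DecidableEq D] (F : S → Finset D) (s : ℕ → S)

theorem visited_succ (k : ℕ) : visited F s (k + 1) = F (s k) ∪ visited F s k := by
  rw [visited, Finset.range_add_one, Finset.biUnion_insert, visited]

theorem subset_visited_of_not_disjoint (hF : ∀ t t' : S, F t = F t' ∨ Disjoint (F t) (F t'))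
    {k : ℕ} (h : ¬Disjoint (F (s k)) (visited F s k)) : F (s k) ⊆ visited F s k :=
  Finset.subset_biUnion_of_not_disjoint (fun j _ => hF (s k) (s j)) h

theorem prod_ite_mem_visited [Fintype D] {A : Type*} (I : D → A) (α₀ α₁ : A → ℝ)
    (hα₀ : ∀ a, 0 < α₀ a) (hF : ∀ t t' : S, F t = F t' ∨ Disjoint (F t) (F t'))
    {n : ℕ} (hn : 1 ≤ n) :
    (∏ y : D, if y ∈ visited F s n then α₁ (I y) else α₀ (I y)) =
      (∏ i ∈ Finset.Ico 1 n,
          if Disjoint (F (s i)) (visited F s i)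
            then fragLik α₁ I (F (s i)) / fragLik α₀ I (F (s i)) else 1) *
        ∏ y : D, if y ∈ F (s 0) then α₁ (I y) else α₀ (I y) := by
  induction n, hn using Nat.le_induction with
  | base => simp [visited]
  | succ n hn ih =>
    rw [visited_succ, Finset.prod_Ico_succ_top hn, mul_right_comm, ← ih]
    by_cases hd : Disjoint (F (s n)) (visited F s n)
    · rw [if_pos hd, prod_ite_mem_union_of_disjoint hd _ _ fun y _ => (hα₀ (I y)).ne', fragLik,
        fragLik, mul_comm]
    · rw [if_neg hd, mul_one, Finset.union_eq_right.mpr (subset_visited_of_not_disjoint F s hF hd)]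

end visited

/-- Lemma 1 of the paper: in the hidden Markov fragment model (Markov states,
conditionally independent voxel intensities which are foreground on visited fragments
and background elsewhere, fragments pairwise equal or disjoint), the joint probability
of the state sequence and the full image factors through the likelihood ratios of the
newly visited fragments and the transition probabilities. -/
theorem joint_probability_factorization
    {S D A : Type*} [Fintype D] [DecidableEq D]
    (F : S → Finset D) (I : D → A) (α₀ α₁ : A → ℝ)
    (hα₀ : ∀ a, 0 < α₀ a)
    (hF : ∀ t t' : S, F t = F t' ∨ Disjoint (F t) (F t'))
    (π : S → ℝ) (Pstep : S → S → ℝ) (n : ℕ) (hn : 1 ≤ n) (s : ℕ → S) :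
    π (s 0) * (∏ i ∈ Finset.Ico 1 n, Pstep (s (i - 1)) (s i)) *
        (∏ y : D, if y ∈ visited F s n then α₁ (I y) else α₀ (I y))
    = (∏ i ∈ Finset.Ico 1 n,
          (if Disjoint (F (s i)) (visited F s i)
            then fragLik α₁ I (F (s i)) / fragLik α₀ I (F (s i)) else 1) *
          Pstep (s (i - 1)) (s i)) *
        (π (s 0) * ∏ y : D, if y ∈ F (s 0) then α₁ (I y) else α₀ (I y)) := by
  rw [prod_ite_mem_visited F s I α₀ α₁ hα₀ hF hn, Finset.prod_mul_distrib]
  ring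
end

section
/- Under the assumptions of the hidden Markov fragment model, the restricted joint probability of a state sequence and the image on its own fragments factors as p(s_{1:n}, I_{F_{1:n}}) = Π_{i=2}^n α₁(I_{F_i})^{δ(F_i ⊆ D \ F_{1:i-1})} · p(s_i | s_{i-1}) · p(s₁, I_{F₁}). -/
/-!
Since any two fragments are equal or disjoint, the fragment of the `k`-th state either is
disjoint from everything visited before or was already visited in full. Hence passing from
`F_{1:k}` to `F_{1:k+1}` multiplies the likelihood by that fragment's likelihood in the first
case and by `1` in the second, and the factorization follows by telescoping.
-/

namespace visited

variable {S D : Type*} [DecidableEq D] (F : S → Finset D) (s : ℕ → S)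

@[simp]
lemma zero : visited F s 0 = ∅ := rfl

lemma succ (k : ℕ) : visited F s (k + 1) = visited F s k ∪ F (s k) := by
  simp [visited, Finset.range_add_one, Finset.biUnion_insert, Finset.union_comm]

lemma subset_of_not_disjoint (hF : ∀ t t' : S, F t = F t' ∨ Disjoint (F t) (F t'))
    {k : ℕ} (h : ¬ Disjoint (F (s k)) (visited F s k)) : F (s k) ⊆ visited F s k := by
  obtain ⟨j, hj, hjk⟩ : ∃ j ∈ Finset.range k, ¬ Disjoint (F (s k)) (F (s j)) := by
    simpa [visited, Finset.disjoint_biUnion_right] using h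
  have hFeq : F (s k) = F (s j) := (hF (s k) (s j)).resolve_right hjk
  exact hFeq ▸ Finset.subset_biUnion_of_mem (fun j => F (s j)) hj

variable {M : Type*} [CommMonoid M]

lemma prod_succ (hF : ∀ t t' : S, F t = F t' ∨ Disjoint (F t) (F t')) (f : D → M) (k : ℕ) :
    ∏ y ∈ visited F s (k + 1), f y =
      (∏ y ∈ visited F s k, f y) *
        if Disjoint (F (s k)) (visited F s k) then ∏ y ∈ F (s k), f y else 1 := by
  rw [succ]
  split_ifs with hdisj
  · exact Finset.prod_union hdisj.symm
  · rw [Finset.union_eq_left.mpr (subset_of_not_disjoint F s hF hdisj), mul_one]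

lemma prod_eq_prod_range (hF : ∀ t t' : S, F t = F t' ∨ Disjoint (F t) (F t'))
    (f : D → M) (n : ℕ) :
    ∏ y ∈ visited F s n, f y =
      ∏ i ∈ Finset.range n,
        if Disjoint (F (s i)) (visited F s i) then ∏ y ∈ F (s i), f y else 1 :=
  (Finset.prod_range_induction _ (fun k => ∏ y ∈ visited F s k, f y) (by simp) n
    fun k _ => prod_succ F s hF f k).symm

end visited

/-- The restricted joint probability of a state sequence and the image on its own
visited fragments factors through the foreground likelihoods of the newly visited
fragments and the transition probabilities. -/
theorem restricted_joint_probability_factorization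
    {S D A : Type*} [DecidableEq D]
    (F : S → Finset D) (I : D → A) (α₁ : A → ℝ)
    (hF : ∀ t t' : S, F t = F t' ∨ Disjoint (F t) (F t'))
    (π : S → ℝ) (Pstep : S → S → ℝ) (n : ℕ) (hn : 1 ≤ n) (s : ℕ → S) :
    π (s 0) * (∏ i ∈ Finset.Ico 1 n, Pstep (s (i - 1)) (s i)) *
        (∏ y ∈ visited F s n, α₁ (I y))
    = (∏ i ∈ Finset.Ico 1 n,
          (if Disjoint (F (s i)) (visited F s i)
            then fragLik α₁ I (F (s i)) else 1) *
          Pstep (s (i - 1)) (s i)) *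
        (π (s 0) * fragLik α₁ I (F (s 0))) := by
  rw [visited.prod_eq_prod_range F s hF, Finset.prod_range_eq_mul_Ico _ hn,
    Finset.prod_mul_distrib]
  simp only [visited.zero, Finset.disjoint_empty_right, if_true, fragLik]
  ring
end

section
/- In the hidden Markov fragment model with α₁(I_y) ≤ 1 for all voxels y, for any state sequence s_{1:n} from a fixed start state to a fixed end state that contains a repeated state, the sequence obtained by deleting all elements strictly between the two occurrences of the repeated state (keeping one occurrence) has joint probability p(s'_{1:m}, I_{F'_{1:m}}) at least as large as p(s_{1:n}, I_{F_{1:n}}). -/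
/-- The joint probability of a state sequence of length `n` and the image on its own
fragments, in the factored form of Statement 1 of the paper. -/
noncomputable def seqScore {S D A : Type*} [DecidableEq D]
    (F : S → Finset D) (I : D → A) (α₁ : A → ℝ)
    (π : S → ℝ) (Pstep : S → S → ℝ) (s : ℕ → S) (n : ℕ) : ℝ :=
  (∏ i ∈ Finset.Ico 1 n,
      (if Disjoint (F (s i)) (visited F s i) then fragLik α₁ I (F (s i)) else 1) *
      Pstep (s (i - 1)) (s i)) *
    (π (s 0) * fragLik α₁ I (F (s 0)))


/-!
Because any two fragments are equal or disjoint, the image factors of `seqScore` multiply to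
the product of `fragLik` over the *set* of distinct fragments visited: a repeated fragment
contributes `1`. Deleting a cycle leaves a subsequence `s ∘ σ` whose visited fragments and
whose transitions (the one skip joins two equal states) are among those of `s`; as every
factor lies in `[0, 1]`, dropping factors can only increase the product.
-/

open Finset

section

variable {S D A : Type*}

lemma fragLik_nonneg {α : A → ℝ} (hα : ∀ a, 0 ≤ α a) (I : D → A) (Fs : Finset D) :
    0 ≤ fragLik α I Fs :=
  prod_nonneg fun y _ => hα (I y)

lemma fragLik_le_one {α : A → ℝ} (hα : ∀ a, 0 ≤ α a ∧ α a ≤ 1) (I : D → A) (Fs : Finset D) :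
    fragLik α I Fs ≤ 1 :=
  prod_le_one (fun y _ => (hα (I y)).1) fun y _ => (hα (I y)).2

section Fragments

variable [DecidableEq D] (F : S → Finset D)

lemma visited_zero (s : ℕ → S) : visited F s 0 = ∅ := by
  simp [visited]

lemma subset_visited {s : ℕ → S} {i k : ℕ} (hik : i < k) : F (s i) ⊆ visited F s k :=
  subset_biUnion_of_mem (fun j => F (s j)) (mem_range.mpr hik)

variable {F}

lemma disjoint_visited_of_notMem_image (hF : ∀ t t' : S, F t = F t' ∨ Disjoint (F t) (F t'))
    {s : ℕ → S} {n : ℕ} (hnew : F (s n) ∉ (range n).image fun i => F (s i)) :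
    Disjoint (F (s n)) (visited F s n) := by
  rw [visited, disjoint_biUnion_right]
  intro i hi
  refine (hF (s n) (s i)).resolve_left fun heq => hnew ?_
  exact mem_image.mpr ⟨i, hi, heq.symm⟩

lemma prod_firstVisit_eq_prod_image (I : D → A) (α : A → ℝ)
    (hF : ∀ t t' : S, F t = F t' ∨ Disjoint (F t) (F t')) (s : ℕ → S) (n : ℕ) :
    ∏ i ∈ range n,
        (if Disjoint (F (s i)) (visited F s i) then fragLik α I (F (s i)) else 1) =
      ∏ Fs ∈ (range n).image (fun i => F (s i)), fragLik α I Fs := by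
  induction n with
  | zero => simp
  | succ n ih =>
    rw [prod_range_succ, range_add_one, image_insert, ih]
    by_cases hnew : F (s n) ∈ (range n).image fun i => F (s i)
    · rw [insert_eq_self.mpr hnew]
      obtain ⟨i, hi, hFi⟩ := mem_image.mp hnew
      -- a fragment disjoint from an earlier copy of itself is empty
      have hrepeat : (if Disjoint (F (s n)) (visited F s n) then fragLik α I (F (s n))
          else 1) = 1 := by
        split_ifs with hd
        · have hempty : F (s n) = ∅ :=
            disjoint_self.mp (hd.mono_right (hFi ▸ subset_visited F (mem_range.mp hi)))
          simp [fragLik, hempty]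
        · rfl
      rw [hrepeat, mul_one]
    · rw [if_pos (disjoint_visited_of_notMem_image hF hnew), prod_insert hnew, mul_comm]

lemma seqScore_eq_of_pos (I : D → A) (α₁ : A → ℝ)
    (hF : ∀ t t' : S, F t = F t' ∨ Disjoint (F t) (F t'))
    (π : S → ℝ) (Pstep : S → S → ℝ) (s : ℕ → S) {n : ℕ} (hn : 0 < n) :
    seqScore F I α₁ π Pstep s n =
      π (s 0) * (∏ Fs ∈ (range n).image (fun i => F (s i)), fragLik α₁ I Fs) *
        ∏ i ∈ Ico 1 n, Pstep (s (i - 1)) (s i) := by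
  rw [seqScore, prod_mul_distrib, ← prod_firstVisit_eq_prod_image I α₁ hF s n,
    range_eq_Ico, prod_eq_prod_Ico_succ_bot hn, visited_zero, if_pos (disjoint_empty_right _)]
  ring

end Fragments

lemma seqScore_le_seqScore_comp [DecidableEq D]
    {F : S → Finset D} {I : D → A} {α₁ : A → ℝ} (hα₁ : ∀ a, 0 ≤ α₁ a ∧ α₁ a ≤ 1)
    (hF : ∀ t t' : S, F t = F t' ∨ Disjoint (F t) (F t'))
    {π : S → ℝ} (hπ : ∀ t, 0 ≤ π t)
    {Pstep : S → S → ℝ} (hP : ∀ t t', 0 ≤ Pstep t t' ∧ Pstep t t' ≤ 1)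
    {s : ℕ → S} {σ : ℕ → ℕ} (hσ : StrictMono σ) (hσ0 : σ 0 = 0) {m n : ℕ} (hm : 0 < m)
    (hσn : ∀ i < m, σ i < n) (hskip : ∀ i ∈ Ico 1 m, s (σ (i - 1)) = s (σ i - 1)) :
    seqScore F I α₁ π Pstep s n ≤ seqScore F I α₁ π Pstep (s ∘ σ) m := by
  rw [seqScore_eq_of_pos I α₁ hF π Pstep s (Nat.zero_lt_of_lt (hσn 0 hm)),
    seqScore_eq_of_pos I α₁ hF π Pstep _ hm]
  simp only [Function.comp_apply, hσ0]
  have hfragments : (range m).image (fun i => F (s (σ i))) ⊆ (range n).image fun i => F (s i) :=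
    fun Fs hFs => by
      obtain ⟨i, hi, rfl⟩ := mem_image.mp hFs
      exact mem_image.mpr ⟨σ i, mem_range.mpr (hσn i (mem_range.mp hi)), rfl⟩
  have hsteps : (Ico 1 m).image σ ⊆ Ico 1 n := fun x hx => by
    obtain ⟨i, hi, rfl⟩ := mem_image.mp hx
    obtain ⟨hi1, him⟩ := mem_Ico.mp hi
    exact mem_Ico.mpr ⟨(Nat.zero_le _).trans_lt (hσ hi1), hσn i him⟩
  have htransitions : ∏ i ∈ Ico 1 m, Pstep (s (σ (i - 1))) (s (σ i)) =
      ∏ x ∈ (Ico 1 m).image σ, Pstep (s (x - 1)) (s x) := by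
    rw [prod_image hσ.injective.injOn]
    exact prod_congr rfl fun i hi => by rw [hskip i hi]
  rw [htransitions]
  have hfrag0 : ∀ Fs, 0 ≤ fragLik α₁ I Fs := fragLik_nonneg (fun a => (hα₁ a).1) I
  have hfragments_le := prod_le_prod_of_subset_of_le_one hfragments (fun Fs _ => hfrag0 Fs)
    fun Fs _ _ => fragLik_le_one hα₁ I Fs
  have hsteps_le := prod_le_prod_of_subset_of_le_one hsteps
    (fun x _ => (hP (s (x - 1)) (s x)).1) fun x _ _ => (hP (s (x - 1)) (s x)).2
  exact mul_le_mul (mul_le_mul_of_nonneg_left hfragments_le (hπ _)) hsteps_le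
    (prod_nonneg fun x _ => (hP _ _).1)
    (mul_nonneg (hπ _) (prod_nonneg fun Fs _ => hfrag0 Fs))

end

def cycleSkip (j k : ℕ) (i : ℕ) : ℕ :=
  if i ≤ j then i else i + (k - j)

lemma cycleSkip_strictMono (j k : ℕ) : StrictMono (cycleSkip j k) := fun a b hab => by
  simp only [cycleSkip]
  split_ifs <;> omega

lemma cycleSkip_lt {j k n i : ℕ} (hi : i < n - (k - j)) : cycleSkip j k i < n := by
  simp only [cycleSkip]
  split_ifs <;> omega

lemma apply_cycleSkip_pred {S : Type*} {s : ℕ → S} {j k : ℕ} (hjk : j < k) (hrep : s j = s k)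
    {i : ℕ} (hi : 1 ≤ i) : s (cycleSkip j k (i - 1)) = s (cycleSkip j k i - 1) := by
  rcases lt_trichotomy i (j + 1) with hij | rfl | hij
  · simp only [cycleSkip, if_pos (show i ≤ j by omega), if_pos (show i - 1 ≤ j by omega)]
  · have hj : cycleSkip j k (j + 1 - 1) = j := by simp [cycleSkip]
    have hk : cycleSkip j k (j + 1) - 1 = k := by
      simp only [cycleSkip, if_neg (Nat.not_succ_le_self j)]
      omega
    rw [hj, hk, hrep]
  · simp only [cycleSkip, if_neg (show ¬ i ≤ j by omega), if_neg (show ¬ i - 1 ≤ j by omega)]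
    congr 1
    omega

/-- When all per-voxel foreground densities and transition probabilities lie in `[0,1]`,
deleting the portion of a state sequence strictly between two occurrences of a repeated
state (keeping one occurrence) does not decrease the joint probability. -/
theorem cycle_deletion_increases_probability
    {S D A : Type*} [DecidableEq D]
    (F : S → Finset D) (I : D → A) (α₁ : A → ℝ)
    (hα₁ : ∀ a, 0 ≤ α₁ a ∧ α₁ a ≤ 1)
    (hF : ∀ t t' : S, F t = F t' ∨ Disjoint (F t) (F t'))
    (π : S → ℝ) (hπ : ∀ t, 0 ≤ π t)
    (Pstep : S → S → ℝ) (hP : ∀ t t', 0 ≤ Pstep t t' ∧ Pstep t t' ≤ 1)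
    (n : ℕ) (s : ℕ → S) (j k : ℕ) (hjk : j < k) (hkn : k < n) (hrep : s j = s k) :
    seqScore F I α₁ π Pstep s n ≤
      seqScore F I α₁ π Pstep
        (fun i => if i ≤ j then s i else s (i + (k - j))) (n - (k - j)) := by
  have hcomp : (fun i => if i ≤ j then s i else s (i + (k - j))) = s ∘ cycleSkip j k :=
    funext fun i => (apply_ite s _ _ _).symm
  rw [hcomp]
  exact seqScore_le_seqScore_comp hα₁ hF hπ hP (cycleSkip_strictMono j k) (by simp [cycleSkip])
    (by omega) (fun i hi => cycleSkip_lt hi)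
    (fun i hi => apply_cycleSkip_pred hjk hrep (mem_Ico.mp hi).1)
end
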